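/- Let 1 ≤ p ≤ ∞, φ ∈ ℓ^∞(ℤ), ψ ∈ ℓ^∞(ℕ), and suppose T(φ) + H(ψ) generates a compact operator on ℓ^p(ℕ₀). Then T(φ) is a checkerboard matrix, and ψ = ψ₁ + ψ₂ where H(ψ₁) is a compact Hankel operator with ψ₁ ∈ c₀(ℕ) and H(ψ₂) = −T(φ); the decomposition of ψ is unique. -/

import Mathlib

/-! Compactness of `A` forces its entries `φ (j - k) + ψ (j + k)` to vanish as `j, k → ∞`
jointly: the columns `A eₖ` lie in a compact set, which for `p < ∞` has uniformly small tails,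
and for `p = ∞` the columns even tend to `0` in norm, since every row of the matrix is summable.
On the diagonal through `(k + a, k + b)` the Hankel part only sees `ψ (2k + a + b)`, so `φ (a - b)`
depends on `a + b` alone, which makes `φ` 2-periodic. Then `φ (j - k) = φ (j + k)`, and
`ψ₁ n = ψ n + φ n`, `ψ₂ n = -φ n` is the decomposition, with `H(ψ₁) = A`. -/

open scoped ENNReal Real
open MeasureTheory AddCircle

instance : Fact (0 < 2 * Real.pi) := ⟨by positivity⟩

/-- `ℓ^p(ℤ)` with complex entries. -/
noncomputable abbrev SeqZ (p : ℝ≥0∞) := lp (fun _ : ℤ => ℂ) p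

/-- `ℓ^p(ℕ₀)` with complex entries. -/
noncomputable abbrev SeqN (p : ℝ≥0∞) := lp (fun _ : ℕ => ℂ) p

/-- The bi-infinite matrix `A` generates the bounded operator `T` on `ℓ^p(ℤ)`. -/
def GeneratesZ (p : ℝ≥0∞) [Fact (1 ≤ p)] (A : ℤ → ℤ → ℂ)
    (T : SeqZ p →L[ℂ] SeqZ p) : Prop :=
  ∀ φ : SeqZ p, ∀ j : ℤ, HasSum (fun k : ℤ => A j k * φ k) (T φ j)

/-- The one-sided infinite matrix `A` generates the bounded operator `T` on `ℓ^p(ℕ₀)`. -/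
def GeneratesN (p : ℝ≥0∞) [Fact (1 ≤ p)] (A : ℕ → ℕ → ℂ)
    (T : SeqN p →L[ℂ] SeqN p) : Prop :=
  ∀ φ : SeqN p, ∀ j : ℕ, HasSum (fun k : ℕ => A j k * φ k) (T φ j)

/-- `a ∈ M^p`, witnessed by the bounded Laurent (convolution) operator `La` on
`ℓ^p(ℤ)` whose matrix is `(â_{j-k})_{j,k∈ℤ}`; then `‖a‖_{M^p} = ‖La‖`. -/
def MemMp (p : ℝ≥0∞) [Fact (1 ≤ p)] (a : AddCircle (2 * π) → ℂ)
    (La : SeqZ p →L[ℂ] SeqZ p) : Prop :=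
  Integrable a haarAddCircle ∧
    GeneratesZ p (fun j k => fourierCoeff a (j - k)) La

open Filter Topology

section lp

variable {ι : Type*} {E : ι → Type*} [∀ i, NormedAddCommGroup (E i)] {p : ℝ≥0∞}

theorem Memℓp.tendsto_norm_cofinite_zero {f : ∀ i, E i} (hf : Memℓp f p) (hp : 0 < p.toReal) :
    Tendsto (fun i => ‖f i‖) cofinite (𝓝 0) := by
  have h := ((hf.summable hp).tendsto_cofinite_zero).rpow_const (p := p.toReal⁻¹)
    (Or.inr (inv_nonneg.2 hp.le))
  rw [Real.zero_rpow (inv_ne_zero hp.ne')] at h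
  exact h.congr fun i => Real.rpow_rpow_inv (norm_nonneg _) hp.ne'

variable [Fact (1 ≤ p)]

theorem lp.tendstoUniformlyOn_norm_apply {K : Set (lp E p)} (hK : IsCompact K) (hp : p ≠ ∞) :
    TendstoUniformlyOn (fun i (z : lp E p) => ‖z i‖) 0 cofinite K := by
  have hp₀ : p ≠ 0 := (zero_lt_one.trans_le Fact.out).ne'
  have hp0 : 0 < p.toReal := ENNReal.toReal_pos hp₀ hp
  refine Metric.tendstoUniformlyOn_iff.2 fun ε hε => ?_
  obtain ⟨t, -, htfin, hcover⟩ := hK.finite_cover_balls (e := ε / 2) (by positivity)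
  have hsmall : ∀ᶠ i in cofinite, ∀ z ∈ t, ‖z i‖ < ε / 2 :=
    htfin.eventually_all.2 fun z _ =>
      ((lp.memℓp z).tendsto_norm_cofinite_zero hp0).eventually (gt_mem_nhds (by positivity))
  filter_upwards [hsmall] with i hi w hw
  obtain ⟨z, hzt, hwz⟩ := Set.mem_iUnion₂.1 (hcover hw)
  have hcoord : ‖w i - z i‖ < ε / 2 :=
    (lp.norm_apply_le_norm hp₀ (w - z) i).trans_lt
      (by simpa [dist_eq_norm] using hwz)
  calc dist ((0 : lp E p → ℝ) w) ‖w i‖ = ‖w i‖ := by simp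
    _ ≤ ‖w i - z i‖ + ‖z i‖ := norm_le_norm_sub_add _ _
    _ < ε := by linarith [hi z hzt]

theorem lp.tendsto_of_isCompact_of_tendsto_apply {α : Type*} {l : Filter α} {K : Set (lp E p)}
    (hK : IsCompact K) {y : α → lp E p} (hyK : ∀ᶠ a in l, y a ∈ K) {x : lp E p}
    (hy : ∀ i, Tendsto (fun a => y a i) l (𝓝 (x i))) : Tendsto y l (𝓝 x) := by
  refine hK.tendsto_nhds_of_unique_mapClusterPt hyK fun x' _ hx' => ?_
  have hcoe := (lp.uniformContinuous_coe (E := E) (p := p)).continuous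
  have hclust : MapClusterPt (x' : ∀ i, E i) l (fun a => (y a : ∀ i, E i)) :=
    hx'.tendsto_comp (hcoe.tendsto x')
  exact lp.ext (eq_of_nhds_neBot (ClusterPt.mono hclust (tendsto_pi_nhds.2 hy)))

end lp

theorem GeneratesN.tendsto_row_zero {M : ℕ → ℕ → ℂ} {A : SeqN ∞ →L[ℂ] SeqN ∞}
    (hA : GeneratesN ∞ M A) (j : ℕ) : Tendsto (M j) atTop (𝓝 0) := by
  have hone : Memℓp (fun _ : ℕ => (1 : ℂ)) ∞ := memℓp_infty ⟨1, by rintro _ ⟨_, rfl⟩; simp⟩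
  simpa [← Nat.cofinite_eq_atTop] using (hA ⟨_, hone⟩ j).summable.tendsto_cofinite_zero

section Generates

variable {p : ℝ≥0∞} [Fact (1 ≤ p)] {M : ℕ → ℕ → ℂ} {A : SeqN p →L[ℂ] SeqN p}

theorem GeneratesN.apply_single (hA : GeneratesN p M A) (j k : ℕ) :
    A (lp.single p k 1) j = M j k := by
  refine (hA _ j).unique ?_
  convert hasSum_ite_eq k (M j k) using 1
  funext k'
  rcases eq_or_ne k' k with rfl | hk
  · simp
  · simp [hk]

theorem GeneratesN.tendsto_of_isCompactOperator (hA : GeneratesN p M A)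
    (hc : IsCompactOperator A) :
    Tendsto (fun q : ℕ × ℕ => M q.1 q.2) (atTop ×ˢ atTop) (𝓝 0) := by
  set K := closure (A '' Metric.closedBall 0 1)
  have hK : IsCompact K := hc.isCompact_closure_image_closedBall 1
  have hcol : ∀ k, A (lp.single p k 1) ∈ K := fun k =>
    subset_closure ⟨_, by simp [lp.norm_single (zero_lt_one.trans_le Fact.out)], rfl⟩
  rw [tendsto_zero_iff_norm_tendsto_zero]
  rcases eq_or_ne p ∞ with rfl | hp
  · have hcol0 : Tendsto (fun k => A (lp.single ∞ k 1)) atTop (𝓝 0) :=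
      lp.tendsto_of_isCompact_of_tendsto_apply hK (Eventually.of_forall hcol) fun j => by
        simpa only [hA.apply_single, lp.coeFn_zero, Pi.zero_apply] using hA.tendsto_row_zero j
    refine squeeze_zero (fun _ => norm_nonneg _) (fun q => ?_)
      ((tendsto_norm_zero.comp hcol0).comp tendsto_snd)
    simpa [hA.apply_single] using
      lp.norm_apply_le_norm ENNReal.top_ne_zero (A (lp.single ∞ q.2 1)) q.1
  · have hunif := Metric.tendstoUniformlyOn_iff.1 (lp.tendstoUniformlyOn_norm_apply hK hp)
    refine Metric.tendsto_nhds.2 fun ε hε => ?_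
    filter_upwards [(Nat.cofinite_eq_atTop ▸ hunif ε hε).prod_inl atTop] with q hq
    simpa [hA.apply_single] using hq _ (hcol q.2)

end Generates

section ToeplitzPlusHankel

variable {G : Type*} [AddCommGroup G] [TopologicalSpace G] [IsTopologicalAddGroup G] [T2Space G]
  {φ : ℤ → G} {ψ : ℕ → G}

theorem eq_of_tendsto_toeplitz_add_hankel
    (h : Tendsto (fun q : ℕ × ℕ => φ (q.1 - q.2) + ψ (q.1 + q.2)) (atTop ×ˢ atTop) (𝓝 0))
    {a b c d : ℕ} (hs : a + b = c + d) : φ (a - b) = φ (c - d) := by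
  have diag : ∀ a b : ℕ, Tendsto (fun k => φ (a - b) + ψ (k + k + (a + b))) atTop (𝓝 0) := by
    intro a b
    refine (h.comp ((tendsto_add_atTop_nat a).prodMk (tendsto_add_atTop_nat b))).congr fun k => ?_
    simp only [Function.comp_apply]
    congr 2
    · push_cast; ring
    · ring
  have := (diag a b).sub (diag c d)
  simp only [hs, add_sub_add_right_eq_sub, sub_zero] at this
  exact sub_eq_zero.1 (tendsto_const_nhds_iff.1 this)

theorem periodic_of_tendsto_toeplitz_add_hankel
    (h : Tendsto (fun q : ℕ × ℕ => φ (q.1 - q.2) + ψ (q.1 + q.2)) (atTop ×ˢ atTop) (𝓝 0)) :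
    Function.Periodic φ 2 := by
  intro n
  -- `n + 2 = (n⁺ + 2) - n⁻` and `n = (n⁺ + 1) - (n⁻ + 1)`
  have := eq_of_tendsto_toeplitz_add_hankel h
    (a := n.toNat + 2) (b := (-n).toNat) (c := n.toNat + 1) (d := (-n).toNat + 1) (by ring)
  convert this using 2 <;> push_cast <;> omega

end ToeplitzPlusHankel

theorem Function.Periodic.apply_add_eq_apply_sub {G : Type*} {φ : ℤ → G}
    (h : Function.Periodic φ 2) (j k : ℕ) : φ (j + k) = φ (j - k) := by
  simpa [sub_add_cancel, mul_two] using h.nat_mul k (j - k)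

theorem tendsto_atTop_of_tendsto_comp_add {X : Type*} {f : ℕ → X} {l : Filter X}
    (h : Tendsto (fun q : ℕ × ℕ => f (q.1 + q.2)) (atTop ×ˢ atTop) l) : Tendsto f atTop l := by
  have half : Tendsto (· / 2) atTop atTop := Nat.tendsto_div_const_atTop two_ne_zero
  have rest : Tendsto (fun n => n - n / 2) atTop atTop :=
    tendsto_atTop_mono (fun n => by omega) half
  refine (h.comp (rest.prodMk half)).congr fun n => ?_
  simp only [Function.comp_apply]
  congr 1
  omega

theorem statement10_general (p : ℝ≥0∞) [Fact (1 ≤ p)] (φ : ℤ → ℂ) (ψ : ℕ → ℂ)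
    (A : SeqN p →L[ℂ] SeqN p)
    (hgen : GeneratesN p (fun j k => φ ((j : ℤ) - (k : ℤ)) + ψ (j + k)) A)
    (hcpt : IsCompactOperator A) :
    (∀ n : ℤ, φ (n + 2) = φ n) ∧
    (∃! d : (ℕ → ℂ) × (ℕ → ℂ),
      ψ = d.1 + d.2 ∧
      Filter.Tendsto d.1 Filter.atTop (nhds 0) ∧
      (∃ H1 : SeqN p →L[ℂ] SeqN p,
        GeneratesN p (fun j k => d.1 (j + k)) H1 ∧ IsCompactOperator H1) ∧
      (∀ j k : ℕ, d.2 (j + k) = -φ ((j : ℤ) - (k : ℤ)))) := by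
  have hlim := hgen.tendsto_of_isCompactOperator hcpt
  have hper : Function.Periodic φ 2 := periodic_of_tendsto_toeplitz_add_hankel hlim
  set ψ₁ : ℕ → ℂ := fun n => ψ n + φ n
  have hentry : ∀ j k : ℕ, φ (j - k) + ψ (j + k) = ψ₁ (j + k) := fun j k => by
    simp only [ψ₁, Nat.cast_add, hper.apply_add_eq_apply_sub, add_comm]
  refine ⟨hper, ⟨(ψ₁, fun n => -φ n), ⟨?_, ?_, ⟨A, ?_, hcpt⟩, ?_⟩, ?_⟩⟩
  · ext n
    simp [ψ₁]
  · exact tendsto_atTop_of_tendsto_comp_add (hlim.congr fun q => hentry q.1 q.2)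
  · simpa only [hentry] using hgen
  · intro j k
    simp only [Nat.cast_add, hper.apply_add_eq_apply_sub]
  · rintro ⟨d₁, d₂⟩ ⟨hsum, -, -, hd₂⟩
    have h₂ : d₂ = fun n : ℕ => -φ n := funext fun n => by simpa using hd₂ n 0
    subst h₂
    refine Prod.ext (funext fun n => ?_) rfl
    simp [ψ₁, hsum]

/-- If `A = T(φ) + H(ψ)` with `φ ∈ ℓ^∞(ℤ)`, `ψ ∈ ℓ^∞(ℕ)` generates a compact
operator on `ℓ^p(ℕ₀)`, `1 ≤ p ≤ ∞`, then `T(φ)` is a checkerboard matrix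
(equivalently `φ_{n+2} = φ_n` for all `n`), and `ψ = ψ₁ + ψ₂` uniquely, where
`H(ψ₁)` is a compact Hankel operator with `ψ₁ ∈ c₀(ℕ)` and `H(ψ₂) = -T(φ)`.
(Here `ψ : ℕ → ℂ` records `(ψ_{n+1})_{n≥0}`; Hankel entries are `ψ (j + k)`.) -/
theorem statement10 (p : ℝ≥0∞) [Fact (1 ≤ p)] (φ : ℤ → ℂ) (ψ : ℕ → ℂ)
    (hφ : BddAbove (Set.range fun n => ‖φ n‖))
    (hψ : BddAbove (Set.range fun n => ‖ψ n‖))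
    (A : SeqN p →L[ℂ] SeqN p)
    (hgen : GeneratesN p (fun j k => φ ((j : ℤ) - (k : ℤ)) + ψ (j + k)) A)
    (hcpt : IsCompactOperator A) :
    (∀ n : ℤ, φ (n + 2) = φ n) ∧
    (∃! d : (ℕ → ℂ) × (ℕ → ℂ),
      ψ = d.1 + d.2 ∧
      Filter.Tendsto d.1 Filter.atTop (nhds 0) ∧
      (∃ H1 : SeqN p →L[ℂ] SeqN p,
        GeneratesN p (fun j k => d.1 (j + k)) H1 ∧ IsCompactOperator H1) ∧
      (∀ j k : ℕ, d.2 (j + k) = -φ ((j : ℤ) - (k : ℤ)))) :=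
  statement10_general p φ ψ A hgen hcpt
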